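/- Let M be a complete finitely injective metric space and let {B(z_i, R_i) : i ∈ I} be a family of pairwise intersecting closed balls in M whose set of centers {z_i : i ∈ I} is compact. Then X := ⋂_{i∈I} B(z_i, R_i) is nonempty, complete, and geodesic (every two points of X have a midpoint in X). -/

import Mathlib

open Metric Set

/-- A metric space is geodesic if any two distinct points are joined by an isometric curve. -/
def IsGeodesicSpace (M : Type*) [MetricSpace M] : Prop :=
  ∀ x y : M, x ≠ y → ∃ α : ℝ → M, α 0 = x ∧ α (dist x y) = y ∧
    ∀ s ∈ Set.Icc (0 : ℝ) (dist x y), ∀ t ∈ Set.Icc (0 : ℝ) (dist x y),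
      dist (α s) (α t) = |s - t|

/-- Finite intersection property of balls. -/
def FiniteBallIP (M : Type*) [MetricSpace M] : Prop :=
  ∀ (n : ℕ) (c : Fin n → M) (r : Fin n → ℝ),
    (∀ i j, (closedBall (c i) (r i) ∩ closedBall (c j) (r j)).Nonempty) →
    (⋂ i, closedBall (c i) (r i)).Nonempty

/-!
Call a family of balls `closedBall (z i) (R i)` admissible if `dist (z i) (z j) ≤ R i + R j`;
in a geodesic space this is the same as pairwise intersecting. For an admissible family with
totally bounded centers and `ε > 0`, cover the centers by finitely many `ε / 2`-balls around
points `y`, and give `y` the radius `g y = ⨅ i, R i + dist (z i) y`. These finitely many balls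
are again admissible, so they meet, and a common point lies within `R i + ε` of every `z i`.
Applying this to the family enlarged by a ball around the previous approximation produces a
Cauchy sequence of `ε`-approximate common points with `ε → 0`, whose limit is a common point.
Midpoints of two points `x, y` of the intersection are obtained by adding the two balls
of radius `dist x y / 2` around `x` and `y` to the family.
-/

section

variable {M : Type*} [MetricSpace M]

lemma dist_le_add_of_inter_closedBall_nonempty {x y : M} {r s : ℝ}
    (h : (closedBall x r ∩ closedBall y s).Nonempty) : dist x y ≤ r + s :=
  not_lt.1 fun hlt => not_disjoint_iff_nonempty_inter.2 h (closedBall_disjoint_closedBall hlt)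

lemma FiniteBallIP.nonempty (hfip : FiniteBallIP M) : Nonempty M :=
  let ⟨x, _⟩ := hfip 0 Fin.elim0 Fin.elim0 fun i => i.elim0
  ⟨x⟩

lemma IsGeodesicSpace.closedBall_inter_closedBall_nonempty (hgeo : IsGeodesicSpace M)
    {x y : M} {r s : ℝ} (hr : 0 ≤ r) (hs : 0 ≤ s) (h : dist x y ≤ r + s) :
    (closedBall x r ∩ closedBall y s).Nonempty := by
  rcases eq_or_ne x y with rfl | hne
  · exact ⟨x, mem_closedBall_self hr, mem_closedBall_self hs⟩
  obtain ⟨α, hα0, hαd, hiso⟩ := hgeo x y hne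
  set d := dist x y
  have hd : 0 ≤ d := dist_nonneg
  set t := min r d
  have ht : t ∈ Icc 0 d := ⟨le_min hr hd, min_le_right r d⟩
  have hxt : dist (α t) x = t := by
    rw [← hα0, hiso t ht 0 ⟨le_rfl, hd⟩, sub_zero, abs_of_nonneg ht.1]
  have hty : dist (α t) y = d - t := by
    rw [← hαd, hiso t ht d ⟨hd, le_rfl⟩, abs_of_nonpos (sub_nonpos.2 ht.2), neg_sub]
  have hst : d - s ≤ t := le_min (by linarith) (by linarith)
  exact ⟨α t, mem_closedBall.2 (hxt.trans_le (min_le_left r d)),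
    mem_closedBall.2 (by linarith)⟩

lemma iInter_closedBall_nonempty_of_finite (hgeo : IsGeodesicSpace M) (hfip : FiniteBallIP M)
    {κ : Type*} [Finite κ] (c : κ → M) (r : κ → ℝ) (h : ∀ i j, dist (c i) (c j) ≤ r i + r j) :
    (⋂ i, closedBall (c i) (r i)).Nonempty := by
  have hr (i : κ) : 0 ≤ r i := by linarith [dist_self (c i) ▸ h i i]
  have hpair (i j : κ) : (closedBall (c i) (r i) ∩ closedBall (c j) (r j)).Nonempty :=
    hgeo.closedBall_inter_closedBall_nonempty (hr i) (hr j) (h i j)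
  obtain ⟨n, ⟨e⟩⟩ := Finite.exists_equiv_fin κ
  obtain ⟨x, hx⟩ := hfip n (c ∘ e.symm) (r ∘ e.symm) fun i j => hpair _ _
  refine ⟨x, mem_iInter.2 fun i => ?_⟩
  simpa using mem_iInter.1 hx (e i)

section Admissible

variable {ι : Type*} {z : ι → M} {R : ι → ℝ}

lemma dist_optionElim_le (hzR : ∀ i j, dist (z i) (z j) ≤ R i + R j) {p : M} {r : ℝ} (hr : 0 ≤ r)
    (hp : ∀ i, dist p (z i) ≤ r + R i) (a b : Option ι) :
    dist (a.elim p z) (b.elim p z) ≤ a.elim r R + b.elim r R := by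
  rcases a with _ | i <;> rcases b with _ | j
  · simpa using add_nonneg hr hr
  · exact hp j
  · simpa [dist_comm, add_comm] using hp i
  · exact hzR i j

lemma dist_le_iInf_add_iInf [Nonempty ι] (hzR : ∀ i j, dist (z i) (z j) ≤ R i + R j) (y y' : M) :
    dist y y' ≤ (⨅ i, R i + dist (z i) y) + ⨅ i, R i + dist (z i) y' :=
  le_ciInf_add_ciInf fun i j => by
    linarith [dist_triangle4 y (z i) (z j) y', hzR i j, dist_comm y (z i)]

lemma exists_forall_dist_le_add (hgeo : IsGeodesicSpace M) (hfip : FiniteBallIP M) [Nonempty ι]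
    (hzR : ∀ i j, dist (z i) (z j) ≤ R i + R j) (htb : TotallyBounded (range z))
    {ε : ℝ} (hε : 0 < ε) : ∃ q, ∀ i, dist q (z i) ≤ R i + ε := by
  set g : M → ℝ := fun y => ⨅ i, R i + dist (z i) y
  have hR (j : ι) : 0 ≤ R j := by linarith [dist_self (z j) ▸ hzR j j]
  have hg_le (y : M) (i : ι) : g y ≤ R i + dist (z i) y :=
    ciInf_le ⟨0, by rintro _ ⟨j, rfl⟩; exact add_nonneg (hR j) dist_nonneg⟩ i
  obtain ⟨t, ht, hcover⟩ := Metric.totallyBounded_iff.1 htb (ε / 2) (half_pos hε)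
  have := ht.to_subtype
  obtain ⟨q, hq⟩ := iInter_closedBall_nonempty_of_finite hgeo hfip (fun y : t => (y : M))
    (fun y => g y) fun y y' => dist_le_iInf_add_iInf hzR y y'
  refine ⟨q, fun i => ?_⟩
  obtain ⟨y, hy, hzy⟩ := mem_iUnion₂.1 (hcover ⟨i, rfl⟩)
  have hqy : dist q y ≤ g y := mem_closedBall.1 (mem_iInter.1 hq ⟨y, hy⟩)
  linarith [dist_triangle q y (z i), hg_le y i, mem_ball'.1 hzy, dist_comm y (z i)]

lemma exists_dist_le_forall_dist_le_add (hgeo : IsGeodesicSpace M) (hfip : FiniteBallIP M)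
    (hzR : ∀ i j, dist (z i) (z j) ≤ R i + R j) (htb : TotallyBounded (range z)) {p : M} {r : ℝ}
    (hr : 0 ≤ r) (hp : ∀ i, dist p (z i) ≤ r + R i) {ε : ℝ} (hε : 0 < ε) :
    ∃ q, dist p q ≤ r + ε ∧ ∀ i, dist q (z i) ≤ R i + ε := by
  have htb' : TotallyBounded (range fun a : Option ι => a.elim p z) := by
    rw [Option.range_elim]; exact htb.insert p
  obtain ⟨q, hq⟩ := exists_forall_dist_le_add hgeo hfip (dist_optionElim_le hzR hr hp) htb' hε
  exact ⟨q, dist_comm p q ▸ hq none, fun i => hq (some i)⟩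

end Admissible

lemma exists_cauchySeq_forall_mem {S : ℕ → Set M} {x₀ : M} (h₀ : x₀ ∈ S 0) {C r : ℝ} (hr : r < 1)
    (hstep : ∀ n, ∀ p ∈ S n, ∃ q ∈ S (n + 1), dist p q ≤ C * r ^ n) :
    ∃ x : ℕ → M, (∀ n, x n ∈ S n) ∧ CauchySeq x := by
  choose! f hfS hfdist using hstep
  let x : ℕ → M := fun n => Nat.rec x₀ f n
  have hxS (n : ℕ) : x n ∈ S n := by
    induction n with
    | zero => exact h₀
    | succ n ih => exact hfS n (x n) ih
  exact ⟨x, hxS, cauchySeq_of_le_geometric r C hr fun n => hfdist n (x n) (hxS n)⟩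

lemma iInter_closedBall_nonempty_of_totallyBounded [CompleteSpace M] (hgeo : IsGeodesicSpace M)
    (hfip : FiniteBallIP M) {ι : Type*} (z : ι → M) (R : ι → ℝ)
    (hzR : ∀ i j, dist (z i) (z j) ≤ R i + R j) (htb : TotallyBounded (range z)) :
    (⋂ i, closedBall (z i) (R i)).Nonempty := by
  rcases isEmpty_or_nonempty ι with hι | hι
  · have := hfip.nonempty
    simp
  set S : ℕ → Set M := fun n => {p | ∀ i, dist p (z i) ≤ R i + (1 / 2) ^ n}
  obtain ⟨x₀, hx₀⟩ := exists_forall_dist_le_add hgeo hfip hzR htb one_pos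
  have hstep (n : ℕ) (p : M) (hp : p ∈ S n) : ∃ q ∈ S (n + 1), dist p q ≤ 3 / 2 * (1 / 2) ^ n := by
    obtain ⟨q, hpq, hq⟩ := exists_dist_le_forall_dist_le_add hgeo hfip hzR htb (by positivity)
      (fun i => (hp i).trans_eq (add_comm _ _)) (pow_pos (one_half_pos (α := ℝ)) (n + 1))
    exact ⟨q, hq, hpq.trans_eq (by ring)⟩
  obtain ⟨x, hxS, hx⟩ := exists_cauchySeq_forall_mem (S := S) (by simpa [S] using hx₀)
    one_half_lt_one hstep
  obtain ⟨l, hl⟩ := cauchySeq_tendsto_of_complete hx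
  refine ⟨l, mem_iInter.2 fun i => mem_closedBall.2 ?_⟩
  have hR : Filter.Tendsto (fun n : ℕ => R i + (1 / 2 : ℝ) ^ n) Filter.atTop (nhds (R i)) := by
    simpa using tendsto_const_nhds.add (tendsto_pow_atTop_nhds_zero_of_lt_one
      one_half_pos.le (one_half_lt_one (α := ℝ)))
  exact le_of_tendsto_of_tendsto' (hl.dist tendsto_const_nhds) hR fun n => hxS n i

lemma exists_midpoint_mem_iInter_closedBall [CompleteSpace M] (hgeo : IsGeodesicSpace M)
    (hfip : FiniteBallIP M) {ι : Type*} {z : ι → M} {R : ι → ℝ}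
    (hzR : ∀ i j, dist (z i) (z j) ≤ R i + R j) (htb : TotallyBounded (range z)) {x y : M}
    (hx : x ∈ ⋂ i, closedBall (z i) (R i)) (hy : y ∈ ⋂ i, closedBall (z i) (R i)) :
    ∃ w ∈ ⋂ i, closedBall (z i) (R i), dist x w = dist x y / 2 ∧ dist y w = dist x y / 2 := by
  set d := dist x y
  have hd : 0 ≤ d / 2 := by positivity
  have hxz (i : ι) : dist x (z i) ≤ R i := mem_closedBall.1 (mem_iInter.1 hx i)
  have hyz (i : ι) : dist y (z i) ≤ R i := mem_closedBall.1 (mem_iInter.1 hy i)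
  set z₁ : Option ι → M := fun a => a.elim x z
  set R₁ : Option ι → ℝ := fun a => a.elim (d / 2) R
  have hzR₁ : ∀ a b, dist (z₁ a) (z₁ b) ≤ R₁ a + R₁ b :=
    dist_optionElim_le hzR hd fun i => by linarith [hxz i]
  have hyz₁ (a : Option ι) : dist y (z₁ a) ≤ d / 2 + R₁ a := by
    rcases a with _ | i
    · simp only [z₁, R₁, Option.elim_none, dist_comm y x]; linarith
    · simp only [z₁, R₁, Option.elim_some]; linarith [hyz i]
  have htb₂ : TotallyBounded (range fun b : Option (Option ι) => b.elim y z₁) := by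
    rw [Option.range_elim, Option.range_elim]; exact (htb.insert x).insert y
  obtain ⟨w, hw⟩ := iInter_closedBall_nonempty_of_totallyBounded hgeo hfip _ _
    (dist_optionElim_le hzR₁ hd hyz₁) htb₂
  have hw' := mem_iInter.1 hw
  have hwy : dist w y ≤ d / 2 := mem_closedBall.1 (hw' none)
  have hwx : dist w x ≤ d / 2 := mem_closedBall.1 (hw' (some none))
  refine ⟨w, mem_iInter.2 fun i => hw' (some (some i)), ?_, ?_⟩ <;>
    linarith [dist_triangle x w y, dist_comm x w, dist_comm y w]

end

theorem stmt15_general {M : Type*} [MetricSpace M] [CompleteSpace M]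
    (hgeo : IsGeodesicSpace M) (hfip : FiniteBallIP M)
    {ι : Type*} (z : ι → M) (R : ι → ℝ)
    (hpair : ∀ i j, (closedBall (z i) (R i) ∩ closedBall (z j) (R j)).Nonempty)
    (hcomp : IsCompact (Set.range z)) :
    (⋂ i, closedBall (z i) (R i)).Nonempty ∧
    IsComplete (⋂ i, closedBall (z i) (R i)) ∧
    ∀ x ∈ ⋂ i, closedBall (z i) (R i), ∀ y ∈ ⋂ i, closedBall (z i) (R i),
      ∃ w ∈ ⋂ i, closedBall (z i) (R i),
        dist x w = dist x y / 2 ∧ dist y w = dist x y / 2 := by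
  have hzR (i j : ι) : dist (z i) (z j) ≤ R i + R j :=
    dist_le_add_of_inter_closedBall_nonempty (hpair i j)
  exact ⟨iInter_closedBall_nonempty_of_totallyBounded hgeo hfip z R hzR hcomp.totallyBounded,
    (isClosed_iInter fun i => isClosed_closedBall).isComplete,
    fun x hx y hy => exists_midpoint_mem_iInter_closedBall hgeo hfip hzR hcomp.totallyBounded hx hy⟩

theorem stmt15 {M : Type*} [MetricSpace M] [Nonempty M] [CompleteSpace M]
    (hgeo : IsGeodesicSpace M) (hfip : FiniteBallIP M)
    {ι : Type*} (z : ι → M) (R : ι → ℝ)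
    (hpair : ∀ i j, (closedBall (z i) (R i) ∩ closedBall (z j) (R j)).Nonempty)
    (hcomp : IsCompact (Set.range z)) :
    (⋂ i, closedBall (z i) (R i)).Nonempty ∧
    IsComplete (⋂ i, closedBall (z i) (R i)) ∧
    ∀ x ∈ ⋂ i, closedBall (z i) (R i), ∀ y ∈ ⋂ i, closedBall (z i) (R i),
      ∃ w ∈ ⋂ i, closedBall (z i) (R i),
        dist x w = dist x y / 2 ∧ dist y w = dist x y / 2 :=
  stmt15_general hgeo hfip z R hpair hcomp
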